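/- If Ann_{f(A)+J}(J) = 0 (i.e., no nonzero element of the subring f(A)+J of B annihilates J), then Hom_{A ⋈^f J}(A, A ⋈^f J) is isomorphic as an (A ⋈^f J)-module to the ideal f⁻¹(J) × 0 := {(a, 0) | a ∈ f⁻¹(J)} of A ⋈^f J, where A is viewed as an (A ⋈^f J)-module via the projection onto the first coordinate. -/

import Mathlib

/-!
`A` is the cyclic `A ⋈^f J`-module `(A ⋈^f J) ⧸ (0 × J)` generated by `1`, so evaluation at `1`
identifies `Hom(A, A ⋈^f J)` with the annihilator of `0 × J`. An element `(a, f a + k)` kills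
`0 × J` exactly when `f a + k` kills `J`, which by hypothesis means `f a + k = 0`; then
`f a = -k ∈ J`, so the annihilator is `f⁻¹(J) × 0`.
-/

set_option synthInstance.maxHeartbeats 1000000
set_option maxHeartbeats 1000000
/-- The amalgamation `A ⋈^f J` of `A` with `B` along `J` with respect to `f`,
as a subring of `A × B`. -/
def Amalg {A B : Type*} [CommRing A] [CommRing B] (f : A →+* B) (J : Ideal B) :
    Subring (A × B) where
  carrier := {p | ∃ a : A, ∃ j ∈ J, p = (a, f a + j)}
  zero_mem' := ⟨0, 0, J.zero_mem, by simp [Prod.ext_iff]⟩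
  one_mem' := ⟨1, 0, J.zero_mem, by simp [Prod.ext_iff]⟩
  add_mem' := by
    rintro _ _ ⟨a, j, hj, rfl⟩ ⟨a', j', hj', rfl⟩
    exact ⟨a + a', j + j', J.add_mem hj hj', by simp [Prod.ext_iff]; ring⟩
  neg_mem' := by
    rintro _ ⟨a, j, hj, rfl⟩
    exact ⟨-a, -j, J.neg_mem hj, by simp [Prod.ext_iff]; ring⟩
  mul_mem' := by
    rintro _ _ ⟨a, j, hj, rfl⟩ ⟨a', j', hj', rfl⟩
    refine ⟨a * a', f a * j' + f a' * j + j * j',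
      J.add_mem (J.add_mem (J.mul_mem_left _ hj') (J.mul_mem_left _ hj))
        (J.mul_mem_left _ hj'), by simp [Prod.ext_iff]; ring⟩

open Submodule

section CyclicModule

variable {R M N : Type*} [CommRing R] [AddCommGroup M] [Module R M] [AddCommGroup N] [Module R N]
  {m : M}

theorem LinearMap.ext_of_surjective_toSpanSingleton
    (hm : Function.Surjective (LinearMap.toSpanSingleton R M m)) {φ ψ : M →ₗ[R] N}
    (h : φ m = ψ m) : φ = ψ := by
  ext x
  obtain ⟨r, rfl⟩ := hm x
  simp [h]

noncomputable def LinearMap.liftOfSurjectiveToSpanSingleton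
    (hm : Function.Surjective (LinearMap.toSpanSingleton R M m)) (n : N)
    (hn : Ideal.torsionOf R M m ≤ Ideal.torsionOf R N n) : M →ₗ[R] N :=
  (LinearMap.toSpanSingleton R M m).ker.liftQ (LinearMap.toSpanSingleton R N n) hn ∘ₗ
    ((LinearMap.toSpanSingleton R M m).quotKerEquivOfSurjective hm).symm.toLinearMap

theorem LinearMap.liftOfSurjectiveToSpanSingleton_apply_generator
    (hm : Function.Surjective (LinearMap.toSpanSingleton R M m)) (n : N)
    (hn : Ideal.torsionOf R M m ≤ Ideal.torsionOf R N n) :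
    LinearMap.liftOfSurjectiveToSpanSingleton hm n hn m = n := by
  have hmk : ((LinearMap.toSpanSingleton R M m).quotKerEquivOfSurjective hm).symm m =
      Submodule.Quotient.mk (1 : R) := by
    rw [LinearEquiv.symm_apply_eq, LinearMap.quotKerEquivOfSurjective_apply_mk,
      LinearMap.toSpanSingleton_apply, one_smul]
  rw [LinearMap.liftOfSurjectiveToSpanSingleton, LinearMap.comp_apply, LinearEquiv.coe_coe, hmk]
  exact one_smul R n

noncomputable def LinearMap.equivTorsionBySetOfSurjectiveToSpanSingleton
    (hm : Function.Surjective (LinearMap.toSpanSingleton R M m)) :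
    (M →ₗ[R] N) ≃ₗ[R] torsionBySet R N (Ideal.torsionOf R M m) where
  toFun φ := ⟨φ m, (mem_torsionBySet_iff _ _).2 fun r => by
    rw [← map_smul, (Ideal.mem_torsionOf_iff _ _).1 r.2, map_zero]⟩
  map_add' _ _ := rfl
  map_smul' _ _ := rfl
  invFun n := LinearMap.liftOfSurjectiveToSpanSingleton hm n fun r hr =>
    (mem_torsionBySet_iff _ _).1 n.2 ⟨r, hr⟩
  left_inv φ := LinearMap.ext_of_surjective_toSpanSingleton hm
    (LinearMap.liftOfSurjectiveToSpanSingleton_apply_generator hm _ _)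
  right_inv n := Subtype.ext (LinearMap.liftOfSurjectiveToSpanSingleton_apply_generator hm _ _)

end CyclicModule

namespace Amalg

variable {A B : Type*} [CommRing A] [CommRing B] {f : A →+* B} {J : Ideal B}

theorem snd_sub_map_fst_mem (x : Amalg f J) : (x : A × B).2 - f (x : A × B).1 ∈ J := by
  obtain ⟨a, j, hj, hx⟩ := x.2
  simpa [hx] using hj

theorem fst_mem_comap_of_snd_eq_zero {x : Amalg f J} (hx : (x : A × B).2 = 0) :
    (x : A × B).1 ∈ J.comap f := by
  simpa [hx] using J.neg_mem (snd_sub_map_fst_mem x)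

theorem mk_map_mem (a : A) : (a, f a) ∈ Amalg f J := ⟨a, 0, J.zero_mem, by simp⟩

theorem mk_zero_mem {j : B} (hj : j ∈ J) : ((0 : A), j) ∈ Amalg f J := ⟨0, j, hj, by simp⟩

theorem snd_eq_zero_iff_forall_mul_eq_zero
    (hann : ∀ b : B, (∃ a : A, ∃ j ∈ J, b = f a + j) → (∀ x ∈ J, b * x = 0) → b = 0)
    (x : Amalg f J) :
    (x : A × B).2 = 0 ↔ ∀ r : Amalg f J, (r : A × B).1 = 0 → r * x = 0 := by
  refine ⟨fun hx r hr => Subtype.ext (Prod.ext ?_ ?_), fun hx => ?_⟩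
  · simp [hr]
  · simp [hx]
  · refine hann _ ⟨_, _, snd_sub_map_fst_mem x, by ring⟩ fun j hj => ?_
    have := congrArg (fun y : Amalg f J => (y : A × B).2) (hx ⟨_, mk_zero_mem hj⟩ rfl)
    simpa [mul_comm] using this

variable (f J)

abbrev moduleFst : Module (Amalg f J) A :=
  Module.compHom A ((RingHom.fst A B).comp (Amalg f J).subtype)

attribute [local instance] moduleFst

theorem smul_def (r : Amalg f J) (a : A) : r • a = (r : A × B).1 * a := rfl

theorem surjective_toSpanSingleton_one :
    Function.Surjective (LinearMap.toSpanSingleton (Amalg f J) A 1) :=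
  fun a => ⟨⟨_, mk_map_mem a⟩, by simp [smul_def]⟩

variable {f J}

theorem mem_torsionOf_one_iff (r : Amalg f J) :
    r ∈ Ideal.torsionOf (Amalg f J) A 1 ↔ (r : A × B).1 = 0 := by
  simp [smul_def]

theorem mem_torsionBySet_torsionOf_one_iff
    (hann : ∀ b : B, (∃ a : A, ∃ j ∈ J, b = f a + j) → (∀ x ∈ J, b * x = 0) → b = 0)
    (x : Amalg f J) :
    x ∈ torsionBySet (Amalg f J) (Amalg f J) (Ideal.torsionOf (Amalg f J) A 1) ↔
      (x : A × B).1 ∈ J.comap f ∧ (x : A × B).2 = 0 := by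
  rw [mem_torsionBySet_iff, and_iff_right_of_imp fst_mem_comap_of_snd_eq_zero,
    snd_eq_zero_iff_forall_mul_eq_zero hann]
  simp only [Subtype.forall, SetLike.mem_coe, mem_torsionOf_one_iff, smul_eq_mul]

end Amalg

/-- If no nonzero element of `f(A) + J` annihilates `J`, then
`Hom_{A ⋈^f J}(A, A ⋈^f J) ≅ f⁻¹(J) × 0` as `A ⋈^f J`-modules, where `A` is an
`A ⋈^f J`-module via the first projection. -/
theorem amalgamation_hom_iso_comap_times_zero {A B : Type*} [CommRing A] [CommRing B]
    (f : A →+* B) (J : Ideal B)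
    (hann : ∀ b : B, (∃ a : A, ∃ j ∈ J, b = f a + j) → (∀ x ∈ J, b * x = 0) → b = 0) :
    letI : Module (Amalg f J) A :=
      Module.compHom A ((RingHom.fst A B).comp (Amalg f J).subtype)
    ∃ I : Ideal (Amalg f J),
      (I : Set (Amalg f J)) =
        {x : Amalg f J | (x : A × B).1 ∈ J.comap f ∧ (x : A × B).2 = 0} ∧
      Nonempty ((A →ₗ[Amalg f J] Amalg f J) ≃ₗ[Amalg f J] I) :=
  letI := Amalg.moduleFst f J
  ⟨torsionBySet (Amalg f J) (Amalg f J) (Ideal.torsionOf (Amalg f J) A 1),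
    Set.ext (Amalg.mem_torsionBySet_torsionOf_one_iff hann),
    ⟨LinearMap.equivTorsionBySetOfSurjectiveToSpanSingleton
      (Amalg.surjective_toSpanSingleton_one f J)⟩⟩
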